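/- arXiv:1102.2398 — 5 statements merged into one kernel-verified Lean document; each statement's English description precedes it below -/
import Mathlib

section
/- For every finite simple graph G on n vertices and every vertex ℓ, the number of spanning trees of G equals the determinant of the matrix obtained from the combinatorial Laplacian L of G by deleting the ℓ-th row and the ℓ-th column; in particular this determinant is independent of the choice of ℓ. -/
open Matrix
open scoped Classical

/-- Adjacency matrix of a simple graph, as a real matrix. -/
noncomputable def adjMat {n : ℕ} (G : SimpleGraph (Fin n)) : Matrix (Fin n) (Fin n) ℝ :=
  Matrix.of fun i j => if G.Adj i j then (1 : ℝ) else 0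

/-- Diagonal degree matrix of a simple graph. -/
noncomputable def degMat {n : ℕ} (G : SimpleGraph (Fin n)) : Matrix (Fin n) (Fin n) ℝ :=
  Matrix.diagonal fun i => (Nat.card (G.neighborSet i) : ℝ)

/-- Combinatorial Laplacian. -/
noncomputable def lapMat {n : ℕ} (G : SimpleGraph (Fin n)) : Matrix (Fin n) (Fin n) ℝ :=
  degMat G - adjMat G

/-- Number of spanning trees of `G`: spanning subgraphs of `G` that are trees. -/
noncomputable def numSpanningTrees {n : ℕ} (G : SimpleGraph (Fin n)) : ℕ :=
  Nat.card {H : SimpleGraph (Fin n) // H ≤ G ∧ H.IsTree}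

/-- Matrix logarithm via functional calculus (log of eigenvalues), with log 0 = 0. -/
noncomputable def matLog {n : ℕ} (M : Matrix (Fin n) (Fin n) ℝ) : Matrix (Fin n) (Fin n) ℝ :=
  if hM : M.IsHermitian then
    (hM.eigenvectorUnitary : Matrix (Fin n) (Fin n) ℝ) *
      Matrix.diagonal (fun i => Real.log (hM.eigenvalues i)) *
      star (hM.eigenvectorUnitary : Matrix (Fin n) (Fin n) ℝ)
  else 0

/-- Quantum relative entropy S(σ₁‖σ₂) = Tr(σ₁ log σ₁) − Tr(σ₁ log σ₂). -/
noncomputable def qRelEntropy {n : ℕ} (σ1 σ2 : Matrix (Fin n) (Fin n) ℝ) : ℝ :=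
  (σ1 * matLog σ1).trace - (σ1 * matLog σ2).trace

/-- Projection Π_ℓ = I − E_ℓℓ. -/
noncomputable def projP {n : ℕ} (ℓ : Fin n) : Matrix (Fin n) (Fin n) ℝ :=
  1 - Matrix.single ℓ ℓ 1

/-- Q_ℓ = E_ℓℓ. -/
noncomputable def projQ {n : ℕ} (ℓ : Fin n) : Matrix (Fin n) (Fin n) ℝ :=
  Matrix.single ℓ ℓ 1

/-- Pinching map Φ_ℓ. -/
noncomputable def pinch {n : ℕ} (ℓ : Fin n) (M : Matrix (Fin n) (Fin n) ℝ) :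
    Matrix (Fin n) (Fin n) ℝ :=
  projP ℓ * M * projP ℓ + projQ ℓ * M * projQ ℓ

/-- Maximum degree. -/
noncomputable def maxDeg {n : ℕ} (G : SimpleGraph (Fin n)) : ℕ :=
  Finset.univ.sup fun i => Nat.card (G.neighborSet i)

/-!
Write `L = N Nᵀ` with `N` the oriented incidence matrix, so that deleting row `ℓ` of `N` gives a
matrix `A` with `L'_ℓ = A Aᵀ`. By Cauchy–Binet, `det (A Aᵀ)` is the sum of `(det A_S)²` over the
`n`-element edge sets `S`. If the graph with edge set `S` is connected, the columns of `A_S` generate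
all of `ℤⁿ`, since `e_u - e_ℓ` telescopes along a walk from `u` to `ℓ`; hence `det A_S = ±1`.
Otherwise the indicator of a component avoiding `ℓ` is a left kernel vector and `det A_S = 0`.
Finally, a graph with `n + 1` vertices and `n` edges is a tree exactly when it is connected.
-/

open Finset Function

section SumByImage

variable {m α M : Type*} [Fintype m] [DecidableEq m] [Fintype α] [DecidableEq α]
  [AddCommMonoid M]

theorem Fintype.sum_pi_subtype_eq_sum_filter (S : Finset α) (F : (m → α) → M) :
    ∑ g : m → S, F (Subtype.val ∘ g) = ∑ f with ∀ i, f i ∈ S, F f := by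
  rw [Finset.sum_subtype (p := fun f : m → α => ∀ i, f i ∈ S) _ (by simp)]
  exact Fintype.sum_equiv Equiv.subtypePiEquivPi.symm _ _ fun _ => rfl

theorem Fintype.sum_eq_sum_powersetCard_of_not_injective_eq_zero (F : (m → α) → M)
    (hF : ∀ f, ¬Injective f → F f = 0) :
    ∑ f, F f = ∑ S ∈ powersetCard (Fintype.card m) univ, ∑ g : m → S, F (Subtype.val ∘ g) := by
  simp_rw [Fintype.sum_pi_subtype_eq_sum_filter, Finset.sum_filter]
  rw [Finset.sum_comm]
  refine Finset.sum_congr rfl fun f _ => ?_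
  by_cases hf : Injective f
  · have hcard : #(univ.image f) = Fintype.card m := card_image_of_injective _ hf
    have hS : {S ∈ powersetCard (Fintype.card m) (univ : Finset α) | ∀ i, f i ∈ S} =
        {univ.image f} := by
      ext S
      simp only [mem_filter, mem_powersetCard_univ, mem_singleton]
      constructor
      · rintro ⟨hS, hfS⟩
        exact (eq_of_subset_of_card_le (by simpa [image_subset_iff] using hfS)
          (by rw [hS, hcard])).symm
      · rintro rfl
        exact ⟨hcard, fun i => mem_image_of_mem f (mem_univ i)⟩
    rw [← Finset.sum_filter, hS, sum_singleton]
  · simp [hF f hf]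

end SumByImage

namespace Matrix

variable {m α R : Type*} [Fintype m] [DecidableEq m] [CommRing R]

theorem det_mul_eq_sum_det_submatrix_mul_prod [Fintype α] (A : Matrix m α R)
    (B : Matrix α m R) :
    (A * B).det = ∑ f : m → α, (A.submatrix id f).det * ∏ i, B (f i) i := by
  simp only [det_apply', mul_apply, prod_univ_sum, Fintype.piFinset_univ, Finset.mul_sum,
    Finset.sum_mul, submatrix_apply, id]
  rw [Finset.sum_comm]
  refine Finset.sum_congr rfl fun f _ => Finset.sum_congr rfl fun σ _ => ?_
  rw [Finset.prod_mul_distrib, mul_assoc]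

/-- The Cauchy–Binet formula. -/
theorem det_mul_eq_sum_powersetCard [Fintype α] [DecidableEq α] (A : Matrix m α R)
    (B : Matrix α m R) :
    (A * B).det = ∑ S ∈ powersetCard (Fintype.card m) univ,
      (A.submatrix id (Subtype.val : S → α) * B.submatrix (Subtype.val : S → α) id).det := by
  rw [det_mul_eq_sum_det_submatrix_mul_prod,
    Fintype.sum_eq_sum_powersetCard_of_not_injective_eq_zero]
  · refine sum_congr rfl fun S _ => ?_
    rw [det_mul_eq_sum_det_submatrix_mul_prod]
    rfl
  · intro f hf
    obtain ⟨i, j, hij, hne⟩ := not_injective_iff.1 hf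
    rw [det_zero_of_column_eq hne fun k => by simp [hij], zero_mul]

theorem det_mul_transpose_eq_det_submatrix_sq [Fintype α] (M : Matrix m α R) (e : m ≃ α) :
    (M * Mᵀ).det = (M.submatrix id e).det ^ 2 := by
  rw [← submatrix_id_id (M * Mᵀ), ← submatrix_mul_equiv M Mᵀ id e id, det_mul,
    ← transpose_submatrix, det_transpose, sq]

theorem isUnit_det_of_forall_single_mem_range (B : Matrix m m R)
    (h : ∀ j, Pi.single j 1 ∈ LinearMap.range B.mulVecLin) : IsUnit B.det := by
  rw [← isUnit_iff_isUnit_det, ← mulVec_surjective_iff_isUnit]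
  change Surjective B.mulVecLin
  rw [← LinearMap.range_eq_top, eq_top_iff, ← (Pi.basisFun R m).span_eq, Submodule.span_le]
  rintro _ ⟨j, rfl⟩
  simpa using h j

end Matrix

namespace Sym2

variable {V : Type*} [LinearOrder V]

def orientedIncidence (e : Sym2 V) : V → ℤ := Pi.single e.inf 1 - Pi.single e.sup 1

theorem orientedIncidence_mk (a b : V) :
    orientedIncidence s(a, b) = Pi.single a 1 - Pi.single b 1 ∨
      orientedIncidence s(a, b) = -(Pi.single a 1 - Pi.single b 1) := by
  rcases le_total a b with h | h
  · left; simp [orientedIncidence, h]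
  · right; simp [orientedIncidence, h]

theorem orientedIncidence_mk_apply_mul_apply (a b i j : V) :
    orientedIncidence s(a, b) i * orientedIncidence s(a, b) j =
      (Pi.single a 1 - Pi.single b 1 : V → ℤ) i * (Pi.single a 1 - Pi.single b 1 : V → ℤ) j := by
  rcases orientedIncidence_mk a b with h | h <;> rw [h]
  rw [Pi.neg_apply, Pi.neg_apply, neg_mul_neg]

theorem orientedIncidence_apply_mul_apply {e : Sym2 V} (he : ¬e.IsDiag) (i j : V) :
    orientedIncidence e i * orientedIncidence e j =
      if i = j then (if i ∈ e then 1 else 0) else (if e = s(i, j) then -1 else 0) := by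
  induction e with
  | _ a b =>
    rw [mk_isDiag_iff] at he
    rw [orientedIncidence_mk_apply_mul_apply]
    simp only [Pi.sub_apply, Pi.single_apply, mem_iff, Sym2.eq_iff]
    by_cases h1 : i = a <;> by_cases h2 : i = b <;> by_cases h3 : j = a <;>
      by_cases h4 : j = b <;> subst_vars <;> simp_all [eq_comm]

end Sym2

namespace SimpleGraph

theorem edgeSet_fromEdgeSet_of_subset {V : Type*} {G : SimpleGraph V} {s : Set (Sym2 V)}
    (h : s ⊆ G.edgeSet) : (fromEdgeSet s).edgeSet = s := by
  rw [edgeSet_fromEdgeSet, sdiff_eq_left, Set.disjoint_left]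
  exact fun x hx => G.not_isDiag_of_mem_edgeSet (h hx)

section OrientedIncidence

variable {V : Type*} [LinearOrder V] (G : SimpleGraph V)

/-- Columns range over all of `Sym2 V`, those of non-edges being zero, so that edge sets of
subgraphs of `G` are plain finsets of `Sym2 V`. -/
noncomputable def orientedIncMatrix : Matrix V (Sym2 V) ℤ :=
  Matrix.of fun v e => if e ∈ G.edgeSet then e.orientedIncidence v else 0

theorem orientedIncMatrix_col_of_mem {e : Sym2 V} (he : e ∈ G.edgeSet) :
    G.orientedIncMatrix.col e = e.orientedIncidence := by
  ext v
  simp [orientedIncMatrix, he]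

theorem orientedIncMatrix_col_of_notMem {e : Sym2 V} (he : e ∉ G.edgeSet) :
    G.orientedIncMatrix.col e = 0 := by
  ext v
  simp [orientedIncMatrix, he]

variable [Fintype V]

theorem orientedIncMatrix_mul_transpose_apply (i j : V) :
    (G.orientedIncMatrix * G.orientedIncMatrixᵀ) i j =
      if i = j then (G.degree i : ℤ) else if G.Adj i j then -1 else 0 := by
  have hsum : (G.orientedIncMatrix * G.orientedIncMatrixᵀ) i j =
      ∑ e ∈ G.edgeFinset, e.orientedIncidence i * e.orientedIncidence j := by
    simp only [mul_apply, transpose_apply, orientedIncMatrix, of_apply, ite_mul_ite, mul_zero,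
      ← sum_filter]
    congr 1
    ext e
    simp
  rw [hsum, sum_congr rfl fun e he => Sym2.orientedIncidence_apply_mul_apply
    (G.not_isDiag_of_mem_edgeSet (mem_edgeFinset.1 he)) i j]
  split_ifs with hij hadj
  · subst hij
    rw [sum_boole, ← card_incidenceFinset_eq_degree]
    congr 2
    ext e
    simp [mem_incidenceFinset, incidenceSet, and_comm]
  · rw [sum_ite_eq']
    simp [hadj]
  · rw [sum_ite_eq']
    simp [hadj]

theorem single_sub_single_mem_range_of_reachable {u v : V} (h : G.Reachable u v) :
    Pi.single u 1 - Pi.single v 1 ∈ LinearMap.range G.orientedIncMatrix.mulVecLin := by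
  obtain ⟨w⟩ := h
  induction w with
  | nil => simp
  | @cons u v w hadj _ ih =>
    rw [← sub_add_sub_cancel _ (Pi.single v 1)]
    refine add_mem ?_ ih
    have hcol : s(u, v).orientedIncidence ∈ LinearMap.range G.orientedIncMatrix.mulVecLin := by
      rw [← G.orientedIncMatrix_col_of_mem hadj, range_mulVecLin]
      exact Submodule.subset_span ⟨_, rfl⟩
    rcases Sym2.orientedIncidence_mk u v with h | h <;> rw [h] at hcol
    · exact hcol
    · simpa using neg_mem hcol

theorem vecMul_orientedIncMatrix_eq_zero {r : V → ℤ} (hr : ∀ a b, G.Adj a b → r a = r b) :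
    r ᵥ* G.orientedIncMatrix = 0 := by
  ext e
  change r ⬝ᵥ G.orientedIncMatrix.col e = 0
  by_cases he : e ∈ G.edgeSet
  · rw [G.orientedIncMatrix_col_of_mem he]
    induction e with
    | _ a b =>
      rcases Sym2.orientedIncidence_mk a b with h | h <;>
        simp [h, dotProduct_sub, dotProduct_single, hr a b he]
  · rw [G.orientedIncMatrix_col_of_notMem he, dotProduct_zero]

end OrientedIncidence

section Reduced

variable {n : ℕ} (H : SimpleGraph (Fin (n + 1))) (ℓ : Fin (n + 1))

theorem isUnit_det_submatrix_succAbove_of_connected (hH : H.Connected)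
    {f : Fin n → Sym2 (Fin (n + 1))} (hf : H.edgeSet ⊆ Set.range f) :
    IsUnit (H.orientedIncMatrix.submatrix ℓ.succAbove f).det := by
  set N := H.orientedIncMatrix
  have hrange : LinearMap.range N.mulVecLin ≤ LinearMap.range (N.submatrix id f).mulVecLin := by
    rw [range_mulVecLin, range_mulVecLin, Submodule.span_le]
    rintro _ ⟨e, rfl⟩
    by_cases he : e ∈ H.edgeSet
    · obtain ⟨k, rfl⟩ := hf he
      exact Submodule.subset_span ⟨k, rfl⟩
    · rw [H.orientedIncMatrix_col_of_notMem he]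
      exact zero_mem _
  refine isUnit_det_of_forall_single_mem_range _ fun j => ?_
  obtain ⟨c, hc⟩ := hrange (H.single_sub_single_mem_range_of_reachable
    (hH.preconnected (ℓ.succAbove j) ℓ))
  refine ⟨c, funext fun i => ?_⟩
  simp only [mulVecLin_apply] at hc ⊢
  change (N.submatrix id f *ᵥ c) (ℓ.succAbove i) = _
  rw [hc]
  simp [Pi.single_apply, Fin.succAbove_ne]

theorem det_submatrix_succAbove_eq_zero_of_not_connected (hH : ¬H.Connected)
    (f : Fin n → Sym2 (Fin (n + 1))) :
    (H.orientedIncMatrix.submatrix ℓ.succAbove f).det = 0 := by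
  obtain ⟨v, hv⟩ : ∃ v, ¬H.Reachable ℓ v := by
    by_contra! h
    exact hH ⟨fun u w => (h u).symm.trans (h w)⟩
  obtain ⟨i₀, rfl⟩ := Fin.exists_succAbove_eq fun h : v = ℓ => hv (h ▸ Reachable.refl _)
  have hℓ : ¬H.Reachable (ℓ.succAbove i₀) ℓ := fun h => hv h.symm
  set r : Fin (n + 1) → ℤ := fun u => if H.Reachable (ℓ.succAbove i₀) u then 1 else 0
  have hr : r ᵥ* H.orientedIncMatrix = 0 := H.vecMul_orientedIncMatrix_eq_zero fun a b hab =>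
    if_congr ⟨fun h => h.trans hab.reachable, fun h => h.trans hab.symm.reachable⟩ rfl rfl
  rw [← exists_vecMul_eq_zero_iff]
  refine ⟨r ∘ ℓ.succAbove, fun h => by simpa [r] using congrFun h i₀, ?_⟩
  ext k
  have := congrFun hr (f k)
  simp only [vecMul, dotProduct, Fin.sum_univ_succAbove _ ℓ] at this
  simpa [vecMul, dotProduct, r, hℓ] using this

theorem det_submatrix_succAbove_sq {f : Fin n → Sym2 (Fin (n + 1))}
    (hf : H.edgeSet ⊆ Set.range f) :
    (H.orientedIncMatrix.submatrix ℓ.succAbove f).det ^ 2 = if H.Connected then 1 else 0 := by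
  split_ifs with hH
  · exact Int.isUnit_sq (H.isUnit_det_submatrix_succAbove_of_connected ℓ hH hf)
  · rw [H.det_submatrix_succAbove_eq_zero_of_not_connected ℓ hH, zero_pow two_ne_zero]

noncomputable def reducedIncMatrix : Matrix (Fin n) (Sym2 (Fin (n + 1))) ℤ :=
  H.orientedIncMatrix.submatrix ℓ.succAbove id

theorem det_reducedIncMatrix_minor_mul_transpose {S : Finset (Sym2 (Fin (n + 1)))}
    (hS : #S = n) :
    ((H.reducedIncMatrix ℓ).submatrix id (Subtype.val : S → _) *
        (H.reducedIncMatrix ℓ)ᵀ.submatrix (Subtype.val : S → _) id).det =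
      if ↑S ⊆ H.edgeSet ∧ (fromEdgeSet (S : Set (Sym2 (Fin (n + 1))))).IsTree then 1 else 0 := by
  set e := (S.equivFinOfCardEq hS).symm
  set f : Fin n → Sym2 (Fin (n + 1)) := Subtype.val ∘ e
  rw [← transpose_submatrix, det_mul_transpose_eq_det_submatrix_sq _ e]
  change (H.orientedIncMatrix.submatrix ℓ.succAbove f).det ^ 2 = _
  by_cases hSH : ↑S ⊆ H.edgeSet
  · set T := fromEdgeSet (S : Set (Sym2 (Fin (n + 1))))
    have hT : T.edgeSet = S := edgeSet_fromEdgeSet_of_subset hSH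
    have hHT : H.orientedIncMatrix.submatrix ℓ.succAbove f =
        T.orientedIncMatrix.submatrix ℓ.succAbove f := by
      ext i k
      have hk : f k ∈ S := (e k).2
      simp [orientedIncMatrix, hSH hk, hT, hk]
    have hcard : Nat.card T.edgeSet = n := by
      rw [hT, Nat.card_coe_set_eq, Set.ncard_coe_finset, hS]
    rw [hHT, T.det_submatrix_succAbove_sq ℓ (by simp [hT, f, Set.range_comp]),
      isTree_iff_connected_and_card, hcard, Nat.card_fin]
    simp [hSH]
  · obtain ⟨x, hxS, hxH⟩ := Set.not_subset.1 hSH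
    rw [if_neg fun h => hSH h.1, det_eq_zero_of_column_eq_zero (e.symm ⟨x, hxS⟩) fun i => ?_,
      zero_pow two_ne_zero]
    simp [f, orientedIncMatrix, hxH]

end Reduced

end SimpleGraph

open SimpleGraph

theorem lapMat_eq_map_orientedIncMatrix {m : ℕ} (G : SimpleGraph (Fin m)) :
    lapMat G = (G.orientedIncMatrix * G.orientedIncMatrixᵀ).map (Int.cast : ℤ → ℝ) := by
  ext i j
  simp only [lapMat, degMat, adjMat, Matrix.sub_apply, diagonal_apply, of_apply, map_apply,
    orientedIncMatrix_mul_transpose_apply, Nat.card_eq_fintype_card, card_neighborSet_eq_degree]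
  split_ifs <;> simp_all

theorem submatrix_lapMat_succAbove {n : ℕ} (G : SimpleGraph (Fin (n + 1))) (ℓ : Fin (n + 1)) :
    (lapMat G).submatrix ℓ.succAbove ℓ.succAbove =
      (G.reducedIncMatrix ℓ * (G.reducedIncMatrix ℓ)ᵀ).map (Int.cast : ℤ → ℝ) := by
  rw [lapMat_eq_map_orientedIncMatrix, submatrix_map, submatrix_mul _ _ _ id _ bijective_id,
    ← transpose_submatrix]
  rfl

theorem numSpanningTrees_eq_card {n : ℕ} (G : SimpleGraph (Fin (n + 1))) :
    numSpanningTrees G = #((powersetCard n univ).filter fun S : Finset (Sym2 (Fin (n + 1))) =>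
      ↑S ⊆ G.edgeSet ∧ (fromEdgeSet (S : Set (Sym2 (Fin (n + 1))))).IsTree) := by
  rw [numSpanningTrees, Nat.card_eq_fintype_card, Fintype.card_subtype]
  refine card_nbij (fun T => T.edgeFinset) ?_ (fun T _ T' _ h => edgeFinset_inj.1 h) ?_
  · intro T hT
    obtain ⟨hTG, hT⟩ := (mem_filter_univ _).1 hT
    have hcard := hT.card_edgeFinset
    simp only [Fintype.card_fin, Nat.add_right_cancel_iff] at hcard
    simp [hcard, edgeSet_mono hTG, hT]
  · intro S hS
    obtain ⟨-, hSG, hS⟩ := mem_filter.1 hS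
    refine ⟨fromEdgeSet S, (mem_filter_univ _).2 ⟨?_, hS⟩, ?_⟩
    · exact (fromEdgeSet_le G).2 (Set.sdiff_subset.trans hSG)
    · exact coe_injective (by rw [coe_edgeFinset, edgeSet_fromEdgeSet_of_subset hSG])

/-- Kirchhoff's Matrix-Tree Theorem: the number of spanning trees equals the
determinant of the Laplacian with the ℓ-th row and column deleted, for any ℓ. -/
theorem kirchhoff_matrix_tree (n : ℕ) (G : SimpleGraph (Fin (n + 1))) (ℓ : Fin (n + 1)) :
    (numSpanningTrees G : ℝ) =
      ((lapMat G).submatrix ℓ.succAbove ℓ.succAbove).det := by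
  rw [submatrix_lapMat_succAbove, ← Int.cast_det, det_mul_eq_sum_powersetCard, Fintype.card_fin,
    sum_congr rfl fun S hS =>
      G.det_reducedIncMatrix_minor_mul_transpose ℓ (mem_powersetCard_univ.1 hS),
    sum_boole, numSpanningTrees_eq_card]
  norm_cast
end

section
/- For every finite simple graph G on n ≥ 2 vertices with maximum degree Δ_max > 0, the number of spanning trees satisfies τ(G) ≤ det(Δ)/Δ_max, where Δ is the diagonal degree matrix of G. -/
open Matrix
open scoped Classical

/-! Root a spanning tree at a vertex `r` of maximum degree and send every other vertex `u` to a
neighbour one step closer to `r`. These `n - 1` edges `{u, parent u}` are distinct, so they are all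
the edges of the tree, and the tree is determined by its parent map. Since `parent u` is a
`G`-neighbour of `u`, there are at most `∏_{u ≠ r} deg u = det Δ / Δ_max` spanning trees. -/

open Finset

namespace SimpleGraph

variable {V : Type*} {H : SimpleGraph V}

theorem Reachable.exists_adj_dist_add_one_eq {u r : V} (h : H.Reachable u r) (hne : u ≠ r) :
    ∃ v, H.Adj u v ∧ H.dist v r + 1 = H.dist u r := by
  obtain ⟨p, hp⟩ := h.exists_walk_length_eq_dist
  cases p with
  | nil => exact absurd rfl hne
  | @cons _ v _ hadj q =>
    refine ⟨v, hadj, le_antisymm ?_ ?_⟩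
    · rw [← hp, Walk.length_cons, add_le_add_iff_right]
      exact dist_le q
    · calc H.dist u r ≤ H.dist u v + H.dist v r := hadj.reachable.dist_triangle_left r
        _ = H.dist v r + 1 := by rw [dist_eq_one_iff_adj.mpr hadj, add_comm]

namespace Connected

noncomputable def parent (hc : H.Connected) (r : V) (u : {u // u ≠ r}) : V :=
  ((hc u r).exists_adj_dist_add_one_eq u.2).choose

variable (hc : H.Connected) (r : V)

theorem adj_parent (u : {u // u ≠ r}) : H.Adj u (hc.parent r u) :=
  ((hc u r).exists_adj_dist_add_one_eq u.2).choose_spec.1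

theorem dist_parent_add_one (u : {u // u ≠ r}) : H.dist (hc.parent r u) r + 1 = H.dist u r :=
  ((hc u r).exists_adj_dist_add_one_eq u.2).choose_spec.2

theorem injective_edge_parent :
    Function.Injective fun u : {u // u ≠ r} ↦ s(u.1, hc.parent r u) := by
  intro u w huw
  rcases Sym2.eq_iff.mp huw with ⟨h, -⟩ | ⟨hu, hw⟩
  · exact Subtype.ext h
  · have hu' := hc.dist_parent_add_one r u
    have hw' := hc.dist_parent_add_one r w
    rw [hw] at hu'
    rw [← hu] at hw'
    omega

end Connected

theorem IsTree.edgeFinset_eq_image_parent [Fintype V] [DecidableEq V] [Fintype H.edgeSet]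
    (ht : H.IsTree) (r : V) :
    H.edgeFinset = univ.image fun u : {u // u ≠ r} ↦ s(u.1, ht.connected.parent r u) := by
  refine (eq_of_subset_of_card_le ?_ ?_).symm
  · simp only [subset_iff, mem_image, mem_univ, true_and, mem_edgeFinset, forall_exists_index]
    rintro _ u rfl
    exact ht.connected.adj_parent r u
  · rw [card_image_of_injective _ (ht.connected.injective_edge_parent r), card_univ,
      Fintype.card_subtype_compl, Fintype.card_subtype_eq, ← ht.card_edgeFinset,
      Nat.add_sub_cancel]

theorem card_isTree_le_prod_card_neighborSet [Fintype V] [DecidableEq V] (G : SimpleGraph V)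
    (r : V) :
    Nat.card {H : SimpleGraph V // H ≤ G ∧ H.IsTree} ≤
      ∏ u : {u // u ≠ r}, Nat.card (G.neighborSet u) := by
  rw [← Nat.card_pi]
  refine Nat.card_le_card_of_injective
    (fun H u ↦ ⟨H.2.2.connected.parent r u, H.2.1 (H.2.2.connected.adj_parent r u)⟩) ?_
  rintro ⟨H₁, _, ht₁⟩ ⟨H₂, _, ht₂⟩ h
  rw [Subtype.mk.injEq, ← edgeFinset_inj, ht₁.edgeFinset_eq_image_parent r,
    ht₂.edgeFinset_eq_image_parent r]
  exact image_congr fun u _ ↦ congrArg (s(u.1, ·)) (congrArg Subtype.val (congrFun h u))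

end SimpleGraph

theorem numSpanningTrees_le_detDeg_div_maxDeg_general
    (n : ℕ) (G : SimpleGraph (Fin n)) (hmax : 0 < maxDeg G) :
    (numSpanningTrees G : ℝ) ≤ (degMat G).det / (maxDeg G : ℝ) := by
  obtain ⟨v, -, -⟩ := Finset.lt_sup_iff.mp hmax
  obtain ⟨r, -, hr⟩ :=
    exists_mem_eq_sup univ ⟨v, mem_univ v⟩ fun i ↦ Nat.card (G.neighborSet i)
  have hdet : (degMat G).det =
      maxDeg G * ∏ u : {u // u ≠ r}, (Nat.card (G.neighborSet u) : ℝ) := by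
    rw [degMat, det_diagonal, Fintype.prod_eq_mul_prod_subtype_ne _ r, maxDeg, hr]
  rw [hdet, mul_div_cancel_left₀ _ (by positivity)]
  exact_mod_cast G.card_isTree_le_prod_card_neighborSet r

/-- τ(G) ≤ det(Δ)/Δ_max. -/
theorem numSpanningTrees_le_detDeg_div_maxDeg (n : ℕ) (hn : 2 ≤ n)
    (G : SimpleGraph (Fin n)) (hmax : 0 < maxDeg G) :
    (numSpanningTrees G : ℝ) ≤ (degMat G).det / (maxDeg G : ℝ) :=
  numSpanningTrees_le_detDeg_div_maxDeg_general n G hmax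
end

section
/- For every finite simple graph G on n ≥ 2 vertices, the number of spanning trees satisfies τ(G) ≤ det(Δ)^{1 − 1/n}, where Δ is the diagonal degree matrix of G and the exponent is a real power. -/
/-! Root a spanning tree at a vertex `r` and send every other vertex to its parent, a neighbour
in `G`. A tree is determined by its parent map, so `τ(G) ≤ ∏_{i ≠ r} dᵢ` for every `r`.
Multiplying these `n` bounds gives `τ(G)ⁿ ≤ (∏ᵢ dᵢ)ⁿ⁻¹ = det(Δ)ⁿ⁻¹`; take `n`-th roots. -/

open Matrix
open scoped Classical

namespace SimpleGraph.IsTree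

variable {V : Type*} {H : SimpleGraph V}

noncomputable def pathTo (hH : H.IsTree) (r v : V) : H.Walk v r :=
  (hH.existsUnique_path v r).exists.choose

lemma isPath_pathTo (hH : H.IsTree) (r v : V) : (hH.pathTo r v).IsPath :=
  (hH.existsUnique_path v r).exists.choose_spec

lemma eq_pathTo (hH : H.IsTree) {r v : V} {p : H.Walk v r} (hp : p.IsPath) :
    p = hH.pathTo r v :=
  (hH.existsUnique_path v r).unique hp (hH.isPath_pathTo r v)

-- At the root itself (`v = r`) this is the junk value `r`.
noncomputable def parent (hH : H.IsTree) (r v : V) : V :=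
  (hH.pathTo r v).snd

lemma adj_parent (hH : H.IsTree) {r v : V} (hv : v ≠ r) : H.Adj v (hH.parent r v) :=
  Walk.adj_snd (Walk.not_nil_of_ne hv)

lemma parent_eq_or_parent_eq_of_adj (hH : H.IsTree) (r : V) {u v : V} (huv : H.Adj u v) :
    (u ≠ r ∧ hH.parent r u = v) ∨ (v ≠ r ∧ hH.parent r v = u) := by
  by_cases hu : u ∈ (hH.pathTo r v).support
  · have hvr : v ≠ r := by
      rintro rfl
      rw [← hH.eq_pathTo .nil, Walk.support_nil, List.mem_singleton] at hu
      exact huv.ne hu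
    exact .inr ⟨hvr, (hH.isAcyclic.eq_snd_of_adj_start (hH.isPath_pathTo r v) huv.symm hu).symm⟩
  · have hq : (Walk.cons huv (hH.pathTo r v)).IsPath := (hH.isPath_pathTo r v).cons hu
    refine .inl ⟨fun hur => hu (hur ▸ Walk.end_mem_support _), ?_⟩
    rw [parent, ← hH.eq_pathTo hq, Walk.snd_cons]

lemma le_of_parent_eq {H' : SimpleGraph V} (hH : H.IsTree) (hH' : H'.IsTree) (r : V)
    (h : ∀ v ≠ r, hH.parent r v = hH'.parent r v) : H ≤ H' := by
  intro u v huv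
  rcases hH.parent_eq_or_parent_eq_of_adj r huv with ⟨hur, rfl⟩ | ⟨hvr, rfl⟩
  · exact h u hur ▸ hH'.adj_parent hur
  · exact (h v hvr ▸ hH'.adj_parent hvr).symm

lemma eq_of_parent_eq {H' : SimpleGraph V} (hH : H.IsTree) (hH' : H'.IsTree) (r : V)
    (h : ∀ v ≠ r, hH.parent r v = hH'.parent r v) : H = H' :=
  le_antisymm (hH.le_of_parent_eq hH' r h) (hH'.le_of_parent_eq hH r fun v hv => (h v hv).symm)

end SimpleGraph.IsTree

theorem SimpleGraph.card_spanningTree_le_prod_card_neighborSet {V : Type*} [Fintype V]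
    [DecidableEq V] (G : SimpleGraph V) (r : V) :
    Nat.card {H : SimpleGraph V // H ≤ G ∧ H.IsTree} ≤
      ∏ v ∈ Finset.univ.erase r, Nat.card (G.neighborSet v) := by
  let code (H : {H : SimpleGraph V // H ≤ G ∧ H.IsTree}) (v : {v // v ≠ r}) :
      G.neighborSet v := ⟨H.2.2.parent r v, H.2.1 (H.2.2.adj_parent v.2)⟩
  have hcode : Function.Injective code := fun H₁ H₂ h =>
    Subtype.ext <| H₁.2.2.eq_of_parent_eq H₂.2.2 r fun v hv =>
      congrArg Subtype.val (congrFun h ⟨v, hv⟩)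
  calc _ ≤ Nat.card ((v : {v // v ≠ r}) → G.neighborSet v) :=
        Nat.card_le_card_of_injective code hcode
    _ = ∏ v : {v // v ≠ r}, Nat.card (G.neighborSet v) := Nat.card_pi
    _ = _ := (Finset.prod_subtype (Finset.univ.erase r) (p := (· ≠ r)) (by simp)
          fun v => Nat.card (G.neighborSet v)).symm

theorem Finset.pow_card_le_prod_pow_of_le_prod_erase {ι M : Type*} [DecidableEq ι]
    [CommMonoid M] [Preorder M] [MulLeftMono M] (s : Finset ι) (f : ι → M) {a : M}
    (h : ∀ i ∈ s, a ≤ ∏ j ∈ s.erase i, f j) : a ^ s.card ≤ (∏ i ∈ s, f i) ^ (s.card - 1) :=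
  calc a ^ s.card = ∏ _i ∈ s, a := (prod_const a).symm
    _ ≤ ∏ i ∈ s, ∏ j ∈ s.erase i, f j := prod_le_prod' h
    _ = ∏ j ∈ s, ∏ _i ∈ s.erase j, f j := prod_comm' fun i j => by
        simp only [mem_erase]; tauto
    _ = ∏ j ∈ s, f j ^ (s.card - 1) := prod_congr rfl fun j hj => by
        rw [prod_const, card_erase_of_mem hj]
    _ = _ := prod_pow s _ f

theorem Real.le_rpow_one_sub_inv_of_pow_le {x y : ℝ} {n : ℕ} (hx : 0 ≤ x) (hy : 0 ≤ y)
    (hn : n ≠ 0) (h : x ^ n ≤ y ^ (n - 1)) : x ≤ y ^ (1 - 1 / (n : ℝ)) :=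
  calc x = (x ^ n) ^ (n⁻¹ : ℝ) := (pow_rpow_inv_natCast hx hn).symm
    _ ≤ (y ^ (n - 1)) ^ (n⁻¹ : ℝ) := rpow_le_rpow (by positivity) h (by positivity)
    _ = y ^ (1 - 1 / (n : ℝ)) := by
        rw [← rpow_natCast, ← rpow_mul hy, Nat.cast_pred (Nat.pos_of_ne_zero hn)]
        field_simp

theorem numSpanningTrees_le_detDeg_rpow_general (n : ℕ)
    (G : SimpleGraph (Fin n)) :
    (numSpanningTrees G : ℝ) ≤ (degMat G).det ^ (1 - 1 / (n : ℝ)) := by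
  rw [degMat, det_diagonal]
  obtain hτ | hτ := (numSpanningTrees G).eq_zero_or_pos
  · rw [hτ, Nat.cast_zero]
    positivity
  obtain ⟨⟨H, -, hH⟩⟩ := (Nat.card_pos_iff.mp hτ).1
  have hn : n ≠ 0 := Fin.pos_iff_nonempty.mpr hH.connected.nonempty |>.ne'
  have hpow : numSpanningTrees G ^ n ≤ (∏ i, Nat.card (G.neighborSet i)) ^ (n - 1) := by
    have := Finset.univ.pow_card_le_prod_pow_of_le_prod_erase _ fun r _ =>
      G.card_spanningTree_le_prod_card_neighborSet r
    rwa [Finset.card_univ, Fintype.card_fin] at this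
  exact Real.le_rpow_one_sub_inv_of_pow_le (by positivity) (by positivity) hn
    (by exact_mod_cast hpow)

/-- τ(G) ≤ det(Δ)^{1 − 1/n}. -/
theorem numSpanningTrees_le_detDeg_rpow (n : ℕ) (hn : 2 ≤ n)
    (G : SimpleGraph (Fin n)) :
    (numSpanningTrees G : ℝ) ≤ (degMat G).det ^ (1 - 1 / (n : ℝ)) :=
  numSpanningTrees_le_detDeg_rpow_general n G
end

section
/- For every finite simple graph G on n ≥ 2 vertices with maximum degree Δ_max > 0, the number of spanning trees satisfies τ(G) ≤ (Tr(Δ)/n)^n / Δ_max, where Δ is the diagonal degree matrix of G. -/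
open Matrix
open scoped Classical

/-! Root a spanning tree `T` at a vertex `r` of maximum degree and send every other vertex to its
neighbour on the path of `T` towards `r`. Every edge of `T` joins a vertex to its parent, so this
parent map determines `T`, and it picks a `G`-neighbour for each `v ≠ r`; hence
`τ(G) ≤ ∏_{v ≠ r} deg v = (∏_v deg v) / Δ_max`, and AM–GM bounds `∏_v deg v` by `(Tr Δ / n)^n`. -/

open Finset

theorem Real.prod_le_arith_mean_pow {ι : Type*} (s : Finset ι) (z : ι → ℝ)
    (hz : ∀ i ∈ s, 0 ≤ z i) :
    ∏ i ∈ s, z i ≤ ((∑ i ∈ s, z i) / #s) ^ #s := by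
  rcases s.eq_empty_or_nonempty with rfl | hs
  · simp
  have hcard : #s ≠ 0 := hs.card_ne_zero
  have amgm := Real.geom_mean_le_arith_mean s (fun _ => 1) z (fun _ _ => zero_le_one)
    (by simpa using hs) hz
  simp only [Real.rpow_one, sum_const, nsmul_eq_mul, mul_one, one_mul] at amgm
  calc ∏ i ∈ s, z i = ((∏ i ∈ s, z i) ^ ((#s : ℝ)⁻¹)) ^ #s :=
        (Real.rpow_inv_natCast_pow (prod_nonneg hz) hcard).symm
    _ ≤ ((∑ i ∈ s, z i) / #s) ^ #s :=
        pow_le_pow_left₀ (Real.rpow_nonneg (prod_nonneg hz) _) amgm _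

namespace SimpleGraph

variable {V : Type*}

theorem IsTree.exists_parent {T : SimpleGraph V} (hT : T.IsTree) (r : V) :
    ∃ f : V → V, f r = r ∧ (∀ v, v ≠ r → T.Adj v (f v)) ∧
      ∀ u v, T.Adj u v ↔ u ≠ v ∧ (f u = v ∨ f v = u) := by
  choose p hp hp_unique using hT.existsUnique_path
  let f : V → V := fun v => (p v r).snd
  have hf_root : f r = r := by simp [f, (hp_unique r r .nil .nil).symm]
  have hadj : ∀ v, v ≠ r → T.Adj v (f v) := fun v hv =>
    (p v r).adj_snd (Walk.not_nil_of_ne hv)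
  refine ⟨f, hf_root, hadj, fun u v => ⟨fun huv => ⟨huv.ne, ?_⟩, ?_⟩⟩
  · by_cases hv : v ∈ (p u r).support
    · exact Or.inl (hT.isAcyclic.eq_snd_of_adj_start (hp u r) huv hv).symm
    · -- prepending the edge `v u` to the path from `u` gives the path from `v`
      have hpv : p v r = .cons huv.symm (p u r) := (hp_unique v r _ ((hp u r).cons hv)).symm
      exact Or.inr (by simp [f, hpv])
  · rintro ⟨hne, hpar | hpar⟩
    · have hu : u ≠ r := by rintro rfl; exact hne (hf_root.symm.trans hpar)
      exact hpar ▸ hadj u hu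
    · have hv : v ≠ r := by rintro rfl; exact hne (hf_root.symm.trans hpar).symm
      exact (hpar ▸ hadj v hv).symm

theorem card_spanningTrees_le_prod_degree [Fintype V] [DecidableEq V] (G : SimpleGraph V)
    [DecidableRel G.Adj] (r : V) :
    Nat.card {T : SimpleGraph V // T ≤ G ∧ T.IsTree} ≤ ∏ v ∈ univ.erase r, G.degree v := by
  let S : V → Finset V := fun v => if v = r then {r} else G.neighborFinset v
  choose f hfr hfadj hfiff using
    fun T : {T : SimpleGraph V // T ≤ G ∧ T.IsTree} => T.2.2.exists_parent r
  have hf_mem : ∀ T, f T ∈ Fintype.piFinset S := by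
    refine fun T => Fintype.mem_piFinset.mpr fun v => ?_
    by_cases hv : v = r
    · subst hv; simp [S, hfr]
    · simpa [S, hv] using T.2.1 (hfadj T v hv)
  have hf_inj : Function.Injective f := fun T T' h => Subtype.ext <| by
    ext u v; rw [hfiff, hfiff, h]
  calc Nat.card {T : SimpleGraph V // T ≤ G ∧ T.IsTree}
      ≤ Nat.card (Fintype.piFinset S) :=
        Nat.card_le_card_of_injective (fun T => ⟨f T, hf_mem T⟩) fun T T' h =>
          hf_inj (congrArg Subtype.val h)
    _ = ∏ v, #(S v) := by rw [Nat.card_eq_fintype_card, Fintype.card_coe, Fintype.card_piFinset]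
    _ = ∏ v ∈ univ.erase r, G.degree v := by
        rw [← prod_erase_mul _ _ (mem_univ r)]
        simp only [S, if_pos, card_singleton, mul_one]
        exact prod_congr rfl fun v hv => by simp [(mem_erase.mp hv).1]

theorem natCard_neighborSet_eq_degree [Fintype V] (G : SimpleGraph V) [DecidableRel G.Adj]
    (v : V) : Nat.card (G.neighborSet v) = G.degree v := by
  rw [Nat.card_eq_fintype_card, ← card_neighborSet_eq_degree]

end SimpleGraph

open SimpleGraph

theorem trace_degMat {n : ℕ} (G : SimpleGraph (Fin n)) :
    (degMat G).trace = ∑ i, (G.degree i : ℝ) := by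
  simp only [degMat, trace_diagonal, natCard_neighborSet_eq_degree]

theorem exists_degree_eq_maxDeg {n : ℕ} {G : SimpleGraph (Fin n)} (h : 0 < maxDeg G) :
    ∃ r, G.degree r = maxDeg G := by
  obtain ⟨i, -, -⟩ := Finset.lt_sup_iff.mp h
  obtain ⟨r, -, hr⟩ := exists_mem_eq_sup univ ⟨i, mem_univ i⟩
    fun i => Nat.card (G.neighborSet i)
  exact ⟨r, by rw [maxDeg, hr, natCard_neighborSet_eq_degree]⟩

theorem numSpanningTrees_le_avgDeg_div_maxDeg_general (n : ℕ)
    (G : SimpleGraph (Fin n)) (hmax : 0 < maxDeg G) :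
    (numSpanningTrees G : ℝ) ≤ ((degMat G).trace / n) ^ n / (maxDeg G : ℝ) := by
  obtain ⟨r, hr⟩ := exists_degree_eq_maxDeg hmax
  have hr_pos : (0 : ℝ) < G.degree r := by exact_mod_cast hr ▸ hmax
  rw [← hr, trace_degMat, le_div_iff₀ hr_pos]
  calc (numSpanningTrees G : ℝ) * G.degree r
      ≤ (∏ v ∈ univ.erase r, (G.degree v : ℝ)) * G.degree r := by
        gcongr
        exact_mod_cast card_spanningTrees_le_prod_degree G r
    _ = ∏ v, (G.degree v : ℝ) := prod_erase_mul _ _ (mem_univ r)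
    _ ≤ ((∑ v, (G.degree v : ℝ)) / n) ^ n := by
        simpa using Real.prod_le_arith_mean_pow univ (fun v => (G.degree v : ℝ)) (by simp)

/-- τ(G) ≤ (Tr(Δ)/n)^n / Δ_max. -/
theorem numSpanningTrees_le_avgDeg_div_maxDeg (n : ℕ) (hn : 2 ≤ n)
    (G : SimpleGraph (Fin n)) (hmax : 0 < maxDeg G) :
    (numSpanningTrees G : ℝ) ≤ ((degMat G).trace / n) ^ n / (maxDeg G : ℝ) :=
  numSpanningTrees_le_avgDeg_div_maxDeg_general n G hmax
end

section
/- Let G be a finite simple graph on n ≥ 2 vertices with d = Tr(Δ) > 0, and let Ψ be the map on n×n matrices defined by Ψ(M) = (1/n)·Σ_{ℓ=1}^{n} Φ_ℓ(M). Then Ψ(Δ) = Δ, Ψ(A) = ((n−2)/n)·A, and for every k ≥ 1, the k-fold iterate satisfies Ψ^k(ρ) = Δ/d − ((n−2)/n)^k · A/d; in particular Ψ^k(ρ) converges to Δ/d as k → ∞. -/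
open Matrix
open scoped Classical

/-!
Each pinching `Φ_ℓ` keeps the diagonal and the entries off row and column `ℓ`, and kills the
rest; averaging over `ℓ`, an off-diagonal entry `(i, j)` survives for the `n - 2` indices
`ℓ ∉ {i, j}`. So `Ψ M = ((n - 2) / n) • M + (2 / n) • diagonal (diag M)`: diagonal matrices
are fixed and hollow ones are scaled by `(n - 2) / n`. Since `ρ = Δ/d - A/d` splits this way,
`Ψ^k ρ = Δ/d - ((n - 2) / n)^k • A/d`, and `0 ≤ (n - 2) / n < 1` gives the limit.
-/

lemma pinch_eq {n : ℕ} (ℓ : Fin n) (M : Matrix (Fin n) (Fin n) ℝ) :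
    pinch ℓ M =
      M - single ℓ ℓ 1 * M - M * single ℓ ℓ 1 + (2 : ℝ) • (single ℓ ℓ 1 * M * single ℓ ℓ 1) := by
  rw [two_smul]
  simp only [pinch, projP, projQ]
  noncomm_ring

lemma sum_pinch {n : ℕ} (M : Matrix (Fin n) (Fin n) ℝ) :
    ∑ ℓ : Fin n, pinch ℓ M = ((n : ℝ) - 2) • M + (2 : ℝ) • diagonal M.diag := by
  simp only [pinch_eq, Finset.sum_add_distrib, Finset.sum_sub_distrib, ← Finset.smul_sum,
    ← Finset.sum_mul, ← Finset.mul_sum, sum_single_one, sum_single_eq_diagonal, one_mul,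
    mul_one, single_mul_mul_single, Finset.sum_const, Finset.card_univ, Fintype.card_fin,
    ← Nat.cast_smul_eq_nsmul ℝ]
  change _ = _ • M + _ • diagonal (fun i => M i i)
  module

noncomputable def avgPinch (n : ℕ) (M : Matrix (Fin n) (Fin n) ℝ) : Matrix (Fin n) (Fin n) ℝ :=
  (n : ℝ)⁻¹ • ∑ ℓ : Fin n, pinch ℓ M

lemma avgPinch_diagonal_add {n : ℕ} (v : Fin n → ℝ) {M : Matrix (Fin n) (Fin n) ℝ}
    (hM : M.diag = 0) :
    avgPinch n (diagonal v + M) = diagonal v + (((n : ℝ) - 2) / n) • M := by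
  obtain rfl | hn := eq_or_ne n 0
  · exact Subsingleton.elim _ _
  have hdiag : (diagonal v + M).diag = v := by rw [diag_add, diag_diagonal, hM, add_zero]
  rw [avgPinch, sum_pinch, hdiag]
  match_scalars
  · field_simp
    ring
  · field_simp

lemma iterate_avgPinch_diagonal_add {n : ℕ} (v : Fin n → ℝ) {M : Matrix (Fin n) (Fin n) ℝ}
    (hM : M.diag = 0) (k : ℕ) :
    (avgPinch n)^[k] (diagonal v + M) = diagonal v + (((n : ℝ) - 2) / n) ^ k • M := by
  induction k with
  | zero => rw [Function.iterate_zero_apply, pow_zero, one_smul]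
  | succ k ih =>
    rw [Function.iterate_succ_apply', ih, avgPinch_diagonal_add v (by simp [hM]), smul_smul,
      pow_succ']

lemma diag_adjMat {n : ℕ} (G : SimpleGraph (Fin n)) : (adjMat G).diag = 0 := by
  ext i
  simp [adjMat]

lemma sub_two_div_mem_Ico {n : ℕ} (hn : 2 ≤ n) : ((n : ℝ) - 2) / n ∈ Set.Ico 0 1 := by
  have hn' : (2 : ℝ) ≤ n := by exact_mod_cast hn
  constructor
  · exact div_nonneg (by linarith) (by linarith)
  · rw [div_lt_one (by linarith)]
    linarith

theorem averaged_pinching_iterates_general (n : ℕ) (hn : 2 ≤ n) (G : SimpleGraph (Fin n)) :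
    let d := (degMat G).trace
    let Ψ : Matrix (Fin n) (Fin n) ℝ → Matrix (Fin n) (Fin n) ℝ :=
      fun M => (n : ℝ)⁻¹ • ∑ ℓ : Fin n, pinch ℓ M
    let ρ := d⁻¹ • lapMat G
    Ψ (degMat G) = degMat G ∧
      Ψ (adjMat G) = (((n : ℝ) - 2) / n) • adjMat G ∧
      (∀ k : ℕ, 1 ≤ k →
        Ψ^[k] ρ = d⁻¹ • degMat G - (((n : ℝ) - 2) / n) ^ k • (d⁻¹ • adjMat G)) ∧
      Filter.Tendsto (fun k => Ψ^[k] ρ) Filter.atTop (nhds (d⁻¹ • degMat G)) := by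
  intro d Ψ ρ
  have hΨ : Ψ = avgPinch n := rfl
  set c := ((n : ℝ) - 2) / n
  set δ : Fin n → ℝ := fun i => Nat.card (G.neighborSet i)
  have hΔ : d⁻¹ • degMat G = diagonal (d⁻¹ • δ) := by
    rw [degMat, diagonal_smul]
  have hρ : ρ = diagonal (d⁻¹ • δ) + -(d⁻¹ • adjMat G) := by
    rw [← hΔ, ← sub_eq_add_neg, ← smul_sub]
    rfl
  have hρA : (-(d⁻¹ • adjMat G)).diag = 0 := by simp [diag_adjMat]
  have hiter (k : ℕ) : Ψ^[k] ρ = d⁻¹ • degMat G - c ^ k • (d⁻¹ • adjMat G) := by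
    rw [hΨ, hρ, iterate_avgPinch_diagonal_add _ hρA, smul_neg, ← sub_eq_add_neg, hΔ]
  have hΨΔ : Ψ (degMat G) = degMat G := by
    rw [hΨ, degMat]
    simpa only [add_zero, smul_zero] using avgPinch_diagonal_add _ diag_zero
  have hΨA : Ψ (adjMat G) = c • adjMat G := by
    rw [hΨ]
    simpa only [diagonal_zero, zero_add] using avgPinch_diagonal_add (fun _ => 0) (diag_adjMat G)
  refine ⟨hΨΔ, hΨA, fun k _ => hiter k, ?_⟩
  obtain ⟨hc₀, hc₁⟩ := sub_two_div_mem_Ico hn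
  simpa only [hiter, sub_zero, zero_smul] using
    ((tendsto_pow_atTop_nhds_zero_of_lt_one hc₀ hc₁).smul_const (d⁻¹ • adjMat G)).const_sub
      (d⁻¹ • degMat G)

/-- Properties of the averaged pinching map Ψ = (1/n) Σ_ℓ Φ_ℓ:
it fixes Δ, scales A by (n−2)/n, its iterates satisfy
Ψ^k(ρ) = Δ/d − ((n−2)/n)^k · A/d, and Ψ^k(ρ) → Δ/d. -/
theorem averaged_pinching_iterates (n : ℕ) (hn : 2 ≤ n) (G : SimpleGraph (Fin n))
    (hd : 0 < (degMat G).trace) :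
    let d := (degMat G).trace
    let Ψ : Matrix (Fin n) (Fin n) ℝ → Matrix (Fin n) (Fin n) ℝ :=
      fun M => (n : ℝ)⁻¹ • ∑ ℓ : Fin n, pinch ℓ M
    let ρ := d⁻¹ • lapMat G
    Ψ (degMat G) = degMat G ∧
      Ψ (adjMat G) = (((n : ℝ) - 2) / n) • adjMat G ∧
      (∀ k : ℕ, 1 ≤ k →
        Ψ^[k] ρ = d⁻¹ • degMat G - (((n : ℝ) - 2) / n) ^ k • (d⁻¹ • adjMat G)) ∧
      Filter.Tendsto (fun k => Ψ^[k] ρ) Filter.atTop (nhds (d⁻¹ • degMat G)) :=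
  averaged_pinching_iterates_general n hn G
end
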